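/- Let F_4 be the field with 4 elements, Tr : F_4 → F_2 its absolute trace, and Norm : F_4 → F_2 its norm map over F_2 (Norm(z) = z·z² = z³). Then the minimum, over all tuples (a,b,c,d) ∈ F_2 × F_4³ with (a,b,c,d) ≠ (0,0,0,0), of the cardinality #{(x,y,z) ∈ F_4³ : Tr(x) + Tr(y²) + Norm(z) = 0 and a + Tr(bx + cy + dz) = 1} equals 8. -/

import Mathlib

namespace Stmt19

inductive F4 : Type
  | O | I | A | B
deriving DecidableEq

instance : Fintype F4 :=
  ⟨⟨↑[F4.O, F4.I, F4.A, F4.B], by decide⟩, fun x => by cases x <;> decide⟩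

namespace F4

def add : F4 → F4 → F4
  | O, x => x
  | x, O => x
  | I, I => O
  | I, A => B
  | I, B => A
  | A, I => B
  | A, A => O
  | A, B => I
  | B, I => A
  | B, A => I
  | B, B => O

def mul : F4 → F4 → F4
  | O, _ => O
  | I, x => x
  | A, O => O
  | A, I => A
  | A, A => B
  | A, B => I
  | B, O => O
  | B, I => B
  | B, A => I
  | B, B => A

def inv : F4 → F4
  | O => O
  | I => I
  | A => B
  | B => A

instance : Zero F4 := ⟨O⟩
instance : One F4 := ⟨I⟩
instance : Add F4 := ⟨add⟩
instance : Mul F4 := ⟨mul⟩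
instance : Neg F4 := ⟨id⟩
instance : Inv F4 := ⟨inv⟩

instance : CommRing F4 where
  add_assoc := by decide
  zero_add := by decide
  add_zero := by decide
  add_comm := by decide
  neg_add_cancel := by decide
  mul_assoc := by decide
  one_mul := by decide
  mul_one := by decide
  mul_comm := by decide
  left_distrib := by decide
  right_distrib := by decide
  zero_mul := by decide
  mul_zero := by decide
  nsmul := nsmulRec
  zsmul := zsmulRec

instance : Field F4 where
  exists_pair_ne := ⟨O, I, by decide⟩
  mul_inv_cancel := by decide
  inv_zero := by decide
  nnqsmul := _
  qsmul := _

instance : CharP F4 2 := by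
  have h2 : (2 : F4) = 0 := by rw [← one_add_one_eq_two]; decide
  have hd : ringChar F4 ∣ 2 := ringChar.dvd (by exact_mod_cast h2)
  rcases (Nat.dvd_prime Nat.prime_two).mp hd with h | h
  · exact absurd h CharP.ringChar_ne_one
  · exact h ▸ ringChar.charP F4


instance : Algebra (ZMod 2) F4 := ZMod.algebra F4 2

instance : Module.Finite (ZMod 2) F4 := Module.Finite.of_finite

lemma card_f4 : Fintype.card F4 = 4 := rfl

lemma finrank_f4 : Module.finrank (ZMod 2) F4 = 2 := by
  have h := Module.card_eq_pow_finrank (K := ZMod 2) (V := F4)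
  rw [ZMod.card, card_f4] at h
  have : (4 : ℕ) = 2 ^ 2 := rfl
  rw [this] at h
  exact (Nat.pow_right_injective (le_refl 2) h).symm

noncomputable def tr : F4 → ZMod 2 := Algebra.trace (ZMod 2) F4
noncomputable def nm : F4 → ZMod 2 := Algebra.norm (ZMod 2) (S := F4)

lemma tr_O : tr O = 0 := map_zero _

lemma tr_I : tr I = 0 := by
  have : (I : F4) = algebraMap (ZMod 2) F4 1 := by rw [map_one]; rfl
  rw [tr, this, Algebra.trace_algebraMap, finrank_f4]
  decide

lemma tr_B_eq : tr B = tr A + tr I := by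
  have : (B : F4) = A + I := by decide
  rw [tr, this, map_add]

lemma tr_A : tr A = 1 := by
  by_contra h
  have hA : tr A = 0 := by
    have : ∀ v : ZMod 2, v ≠ 1 → v = 0 := by decide
    exact this _ h
  have hall : ∀ x : F4, tr x = 0 := by
    intro x
    cases x
    · exact tr_O
    · exact tr_I
    · exact hA
    · rw [tr_B_eq, hA, tr_I]; rfl
  obtain ⟨x, hx⟩ := Algebra.trace_surjective (ZMod 2) F4 (1 : ZMod 2)
  rw [show Algebra.trace (ZMod 2) F4 x = tr x from rfl, hall x] at hx
  exact absurd hx (by decide)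

lemma tr_B : tr B = 1 := by rw [tr_B_eq, tr_A, tr_I]; rfl

def tr' : F4 → ZMod 2
  | O => 0
  | I => 0
  | A => 1
  | B => 1

def nm' : F4 → ZMod 2
  | O => 0
  | _ => 1

lemma tr_eq : ∀ x, tr x = tr' x
  | O => tr_O
  | I => tr_I
  | A => tr_A
  | B => tr_B

lemma nm_eq (x : F4) : nm x = nm' x := by
  rcases eq_or_ne x 0 with rfl | hx
  · rw [nm, Algebra.norm_zero]; rfl
  · have h1 : nm x ≠ 0 := by
      rw [nm, Ne, Algebra.norm_eq_zero_iff]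
      exact hx
    have h2 : ∀ v : ZMod 2, v ≠ 0 → v = 1 := by decide
    rw [h2 _ h1]
    cases x
    · exact absurd rfl hx
    all_goals rfl

def wt (a : ZMod 2) (b c d : F4) : ℕ :=
  (Finset.univ.filter (fun p : F4 × F4 × F4 =>
    tr' p.1 + tr' (p.2.1 ^ 2) + nm' p.2.2 = 0 ∧
    a + tr' (b * p.1 + c * p.2.1 + d * p.2.2) = 1)).card

lemma wt_val : wt 1 1 1 0 = 8 := by decide

lemma wt_lower : ∀ (a : ZMod 2) (b c d : F4),
    (a, b, c, d) ≠ (0, 0, 0, 0) → 8 ≤ wt a b c d := by decide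

noncomputable def e : F4 ≃ₐ[ZMod 2] GaloisField 2 2 :=
  GaloisField.algEquivGaloisFieldOfFintype (K := F4) (p := 2) (n := 2) rfl

lemma tr_symm (x : GaloisField 2 2) :
    tr' (e.symm x) = Algebra.trace (ZMod 2) (GaloisField 2 2) x := by
  rw [← tr_eq, tr, ← Algebra.trace_eq_of_algEquiv e, AlgEquiv.apply_symm_apply]

lemma nm_symm (x : GaloisField 2 2) :
    nm' (e.symm x) = Algebra.norm (ZMod 2) x := by
  rw [← nm_eq, nm, ← Algebra.norm_eq_of_algEquiv e, AlgEquiv.apply_symm_apply]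

lemma ncard_eq (a : ZMod 2) (b c d : GaloisField 2 2) :
    {p : GaloisField 2 2 × GaloisField 2 2 × GaloisField 2 2 |
        Algebra.trace (ZMod 2) (GaloisField 2 2) p.1 +
          Algebra.trace (ZMod 2) (GaloisField 2 2) (p.2.1 ^ 2) +
          Algebra.norm (ZMod 2) p.2.2 = 0 ∧
        a + Algebra.trace (ZMod 2) (GaloisField 2 2)
            (b * p.1 + c * p.2.1 + d * p.2.2) = 1}.ncard
      = wt a (e.symm b) (e.symm c) (e.symm d) := by
  classical
  set E : F4 × F4 × F4 ≃ GaloisField 2 2 × GaloisField 2 2 × GaloisField 2 2 :=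
    e.toEquiv.prodCongr (e.toEquiv.prodCongr e.toEquiv) with hE
  have hiff : ∀ p : GaloisField 2 2 × GaloisField 2 2 × GaloisField 2 2,
      (Algebra.trace (ZMod 2) (GaloisField 2 2) p.1 +
          Algebra.trace (ZMod 2) (GaloisField 2 2) (p.2.1 ^ 2) +
          Algebra.norm (ZMod 2) p.2.2 = 0 ∧
        a + Algebra.trace (ZMod 2) (GaloisField 2 2)
            (b * p.1 + c * p.2.1 + d * p.2.2) = 1) ↔
      (tr' (E.symm p).1 + tr' ((E.symm p).2.1 ^ 2) + nm' (E.symm p).2.2 = 0 ∧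
        a + tr' (e.symm b * (E.symm p).1 + e.symm c * (E.symm p).2.1 +
          e.symm d * (E.symm p).2.2) = 1) := by
    intro p
    have h1 : (E.symm p).1 = e.symm p.1 := rfl
    have h2 : (E.symm p).2.1 = e.symm p.2.1 := rfl
    have h3 : (E.symm p).2.2 = e.symm p.2.2 := rfl
    have e1 : tr' (e.symm p.1) = Algebra.trace (ZMod 2) (GaloisField 2 2) p.1 := tr_symm _
    have e2 : tr' ((e.symm p.2.1) ^ 2) =
        Algebra.trace (ZMod 2) (GaloisField 2 2) (p.2.1 ^ 2) := by
      rw [← map_pow]; exact tr_symm _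
    have e3 : nm' (e.symm p.2.2) = Algebra.norm (ZMod 2) p.2.2 := nm_symm _
    have e4 : tr' (e.symm b * e.symm p.1 + e.symm c * e.symm p.2.1 +
        e.symm d * e.symm p.2.2) =
        Algebra.trace (ZMod 2) (GaloisField 2 2) (b * p.1 + c * p.2.1 + d * p.2.2) := by
      rw [← map_mul, ← map_mul, ← map_mul, ← map_add, ← map_add]; exact tr_symm _
    rw [h1, h2, h3, e1, e2, e3, e4]
  have hset : {p : GaloisField 2 2 × GaloisField 2 2 × GaloisField 2 2 |
        Algebra.trace (ZMod 2) (GaloisField 2 2) p.1 +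
          Algebra.trace (ZMod 2) (GaloisField 2 2) (p.2.1 ^ 2) +
          Algebra.norm (ZMod 2) p.2.2 = 0 ∧
        a + Algebra.trace (ZMod 2) (GaloisField 2 2)
            (b * p.1 + c * p.2.1 + d * p.2.2) = 1}
      = E '' {q : F4 × F4 × F4 |
          tr' q.1 + tr' (q.2.1 ^ 2) + nm' q.2.2 = 0 ∧
          a + tr' (e.symm b * q.1 + e.symm c * q.2.1 + e.symm d * q.2.2) = 1} := by
    rw [Equiv.image_eq_preimage_symm]
    ext p
    exact hiff p
  rw [hset, Set.ncard_image_of_injective _ E.injective, Set.ncard_eq_toFinset_card',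
    Set.toFinset_setOf, wt]

end F4

open F4 in
theorem main :
    IsLeast
      {w : ℕ | ∃ (a : ZMod 2) (b c d : GaloisField 2 2),
        (a, b, c, d) ≠ (0, 0, 0, 0) ∧
        w = {p : GaloisField 2 2 × GaloisField 2 2 × GaloisField 2 2 |
            Algebra.trace (ZMod 2) (GaloisField 2 2) p.1 +
              Algebra.trace (ZMod 2) (GaloisField 2 2) (p.2.1 ^ 2) +
              Algebra.norm (ZMod 2) p.2.2 = 0 ∧
            a + Algebra.trace (ZMod 2) (GaloisField 2 2)
                (b * p.1 + c * p.2.1 + d * p.2.2) = 1}.ncard}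
      8 := by
  constructor
  · refine ⟨1, 1, 1, 0, by simp, ?_⟩
    rw [ncard_eq, map_one, map_zero, wt_val]
  · rintro w ⟨a, b, c, d, hne, rfl⟩
    rw [ncard_eq]
    apply wt_lower
    intro h
    apply hne
    simp only [Prod.mk.injEq] at h ⊢
    exact ⟨h.1, (map_eq_zero_iff e.symm e.symm.injective).mp h.2.1,
      (map_eq_zero_iff e.symm e.symm.injective).mp h.2.2.1,
      (map_eq_zero_iff e.symm e.symm.injective).mp h.2.2.2⟩

end Stmt19


/-- Minimum distance of the `[32,7,8]` binary code of Proposition 4.3: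
over `F₄`, with `f(x) = Tr(x)`, `g(y) = Tr(y²)`, `h(z) = Norm(z)`, the minimum over all
nonzero tuples `(a,b,c,d)` of the weight of the codeword `c*_{a,b,c,d}` equals `8`. -/
theorem stmt_19 :
    IsLeast
      {w : ℕ | ∃ (a : ZMod 2) (b c d : GaloisField 2 2),
        (a, b, c, d) ≠ (0, 0, 0, 0) ∧
        w = {p : GaloisField 2 2 × GaloisField 2 2 × GaloisField 2 2 |
            Algebra.trace (ZMod 2) (GaloisField 2 2) p.1 +
              Algebra.trace (ZMod 2) (GaloisField 2 2) (p.2.1 ^ 2) +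
              Algebra.norm (ZMod 2) p.2.2 = 0 ∧
            a + Algebra.trace (ZMod 2) (GaloisField 2 2)
                (b * p.1 + c * p.2.1 + d * p.2.2) = 1}.ncard}
      8 := by
  exact Stmt19.main
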